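/- arXiv:2601.23229 — 5 statements merged into one kernel-verified Lean document; each statement's English description precedes it below -/
import Mathlib

section
/- Let k ≥ 1 and C ≥ 1 be integers, and set R = 2kC + 1. Let X = {x_1, ..., x_k} be real numbers, and let A(X,C) be the set of sums Σ a_j x_j with a_j ∈ ℤ, |a_j| ≤ C. Then any sequence 0 < z_1 < z_2 < ... < z_m of elements of A(X,C) satisfying z_{i+1} ≥ R·z_i for all i has length m ≤ 2k - 1. -/
/-!
Suppose `2k` positive elements `z₁, …, z_{2k}` of `A(X, C)` were `R`-separated. Their coefficient
vectors are `2k` vectors in `ℤᵏ` with entries at most `C`, so by Siegel's lemma they satisfy a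
nontrivial integer relation `∑ tᵢ zᵢ = 0` with `|tᵢ| ≤ 2kC = R - 1`. But `R`-separation makes the
last `zᵢ` with `tᵢ ≠ 0` exceed `(R - 1)` times the sum of all the earlier ones, so no such relation
exists.
-/

open Finset Matrix

attribute [local instance] Matrix.seminormedAddCommGroup

def IsSeparated {n : ℕ} (R : ℝ) (z : Fin n → ℝ) : Prop :=
  ∀ i : ℕ, ∀ h : i + 1 < n, R * z ⟨i, by omega⟩ ≤ z ⟨i + 1, h⟩

namespace IsSeparated

variable {n : ℕ} {B : ℝ}

theorem comp_castLE {m : ℕ} {R : ℝ} {z : Fin m → ℝ} (hz : IsSeparated R z) (h : n ≤ m) :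
    IsSeparated R (z ∘ Fin.castLE h) :=
  fun i hi => hz i (by omega)

theorem comp_castSucc {R : ℝ} {z : Fin (n + 1) → ℝ} (hz : IsSeparated R z) :
    IsSeparated R (z ∘ Fin.castSucc) :=
  fun i hi => hz i (by omega)

theorem mul_sum_lt_last {z : Fin (n + 1) → ℝ} (hz : IsSeparated (B + 1) z)
    (hpos : ∀ i, 0 < z i) : B * ∑ i : Fin n, z i.castSucc < z (Fin.last n) := by
  induction n with
  | zero => simpa using hpos 0
  | succ n ih =>
    have hlt : B * ∑ i : Fin n, z i.castSucc.castSucc < z (Fin.last n).castSucc :=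
      ih hz.comp_castSucc (fun i => hpos _)
    have hstep : (B + 1) * z (Fin.last n).castSucc ≤ z (Fin.last (n + 1)) := hz n (by omega)
    rw [Fin.sum_univ_castSucc, mul_add]
    linarith

theorem sum_mul_ne_zero {z : Fin n → ℝ} (hz : IsSeparated (B + 1) z) (hpos : ∀ i, 0 < z i)
    {c : Fin n → ℤ} (hc : c ≠ 0) (hcB : ∀ i, |(c i : ℝ)| ≤ B) :
    ∑ i, (c i : ℝ) * z i ≠ 0 := by
  induction n with
  | zero => exact absurd (Subsingleton.elim c 0) hc
  | succ n ih =>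
    rw [Fin.sum_univ_castSucc]
    by_cases hlast : c (Fin.last n) = 0
    · have hc' : c ∘ Fin.castSucc ≠ 0 := fun h =>
        hc (funext fun i => Fin.lastCases hlast (fun j => congrFun h j) i)
      simpa [hlast] using ih hz.comp_castSucc (fun i => hpos _) hc' (fun i => hcB _)
    · have hone : (1 : ℝ) ≤ |(c (Fin.last n) : ℝ)| := by
        exact_mod_cast Int.one_le_abs hlast
      have hsmall : |∑ i : Fin n, (c i.castSucc : ℝ) * z i.castSucc| <
          |(c (Fin.last n) : ℝ) * z (Fin.last n)| := by
        calc |∑ i : Fin n, (c i.castSucc : ℝ) * z i.castSucc|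
            ≤ ∑ i : Fin n, |(c i.castSucc : ℝ)| * z i.castSucc := by
              refine (abs_sum_le_sum_abs _ _).trans_eq (sum_congr rfl fun i _ => ?_)
              rw [abs_mul, abs_of_pos (hpos _)]
          _ ≤ B * ∑ i : Fin n, z i.castSucc := by
              rw [mul_sum]
              exact sum_le_sum fun i _ => mul_le_mul_of_nonneg_right (hcB _) (hpos _).le
          _ < z (Fin.last n) := hz.mul_sum_lt_last hpos
          _ ≤ |(c (Fin.last n) : ℝ) * z (Fin.last n)| := by
              rw [abs_mul, abs_of_pos (hpos _)]
              exact le_mul_of_one_le_left (hpos _).le hone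
      intro hsum
      rw [add_eq_zero_iff_eq_neg.mp hsum, abs_neg] at hsmall
      exact lt_irrefl _ hsmall

end IsSeparated

theorem Int.Matrix.exists_ne_zero_mulVec_eq_zero_abs_le {k H : ℕ} (hk : 1 ≤ k) (hH : 1 ≤ H)
    (M : Matrix (Fin k) (Fin (2 * k)) ℤ) (hM : ∀ j i, |M j i| ≤ H) :
    ∃ t : Fin (2 * k) → ℤ, t ≠ 0 ∧ M *ᵥ t = 0 ∧ ∀ i, |t i| ≤ 2 * k * H := by
  obtain ⟨t, ht0, hMt, ht⟩ := Int.Matrix.exists_ne_zero_int_vec_norm_le M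
    (by simp only [Fintype.card_fin]; omega) (by simp only [Fintype.card_fin]; omega)
  -- with twice as many unknowns as equations, Siegel's exponent `k / (2k - k)` is `1`
  have hexp : (k : ℝ) / (2 * k - k) = 1 := by
    have : (0 : ℝ) < k := by exact_mod_cast hk
    field_simp
    ring
  simp only [Fintype.card_fin, Nat.cast_mul, Nat.cast_ofNat, hexp, Real.rpow_one] at ht
  have hMH : max 1 ‖M‖ ≤ H := by
    refine max_le (by exact_mod_cast hH) ((norm_le_iff (by positivity)).mpr fun j i => ?_)
    rw [Int.norm_eq_abs]
    exact_mod_cast hM j i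
  refine ⟨t, ht0, hMt, fun i => ?_⟩
  have : ‖t i‖ ≤ 2 * k * H := by
    calc ‖t i‖ ≤ ‖t‖ := norm_le_pi_norm t i
      _ ≤ 2 * k * max 1 ‖M‖ := ht
      _ ≤ 2 * k * H := by gcongr
  rw [Int.norm_eq_abs] at this
  exact_mod_cast this

theorem sum_mul_sum_eq_zero_of_mulVec_eq_zero {ι κ : Type*} [Fintype ι] [Fintype κ]
    (M : Matrix ι κ ℤ) {t : κ → ℤ} (hMt : M *ᵥ t = 0) (x : ι → ℝ) :
    ∑ i, (t i : ℝ) * ∑ j, (M j i : ℝ) * x j = 0 := by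
  have hrow : ∀ j, ∑ i, (M j i : ℝ) * t i = 0 := fun j => by
    exact_mod_cast congrFun hMt j
  simp_rw [mul_sum]
  rw [sum_comm]
  refine sum_eq_zero fun j _ => ?_
  simp_rw [← mul_assoc, ← sum_mul, mul_comm (t _ : ℝ), hrow, zero_mul]

theorem stmt_2 (k C : ℕ) (hk : 1 ≤ k) (hC : 1 ≤ C)
    (x : Fin k → ℝ)
    (A : Set ℝ)
    (hA : A = {z : ℝ | ∃ a : Fin k → ℤ, (∀ j, |a j| ≤ (C : ℤ)) ∧
      z = ∑ j, (a j : ℝ) * x j})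
    (m : ℕ) (z : Fin m → ℝ)
    (hzA : ∀ i, z i ∈ A)
    (hzpos : ∀ i, 0 < z i)
    (hsep : ∀ i : ℕ, ∀ h : i + 1 < m,
      z ⟨i + 1, h⟩ ≥ (2 * k * C + 1 : ℝ) * z ⟨i, by omega⟩) :
    m ≤ 2 * k - 1 := by
  by_contra! hm
  have h2k : 2 * k ≤ m := by omega
  subst hA
  choose a ha hz using hzA
  obtain ⟨t, ht0, hMt, htC⟩ := Int.Matrix.exists_ne_zero_mulVec_eq_zero_abs_le hk hC
    (fun j i => a (Fin.castLE h2k i) j) (fun j i => ha _ j)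
  have hsep' : IsSeparated (2 * k * C + 1) z := hsep
  refine (hsep'.comp_castLE h2k).sum_mul_ne_zero (fun i => hzpos _) ht0
    (fun i => by exact_mod_cast htC i) ?_
  simpa only [Function.comp, hz] using sum_mul_sum_eq_zero_of_mulVec_eq_zero _ hMt x
end

section
/- Let B be an M×N integer matrix with N > M > 0, and let H ≥ 1 be an upper bound for the absolute values of the entries of B. Then there exists a nonzero integer vector c ∈ ℤ^N with Bc = 0 and ‖c‖_∞ ≤ (N·H)^{M/(N-M)}. -/
attribute [local instance] Matrix.seminormedAddCommGroup

theorem stmt_3 (M N : ℕ) (hM : 0 < M) (hMN : M < N)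
    (B : Matrix (Fin M) (Fin N) ℤ) (H : ℝ) (hH : 1 ≤ H)
    (hB : ∀ i j, (|B i j| : ℝ) ≤ H) :
    ∃ c : Fin N → ℤ, c ≠ 0 ∧ B.mulVec c = 0 ∧
      ∀ j, (|c j| : ℝ) ≤ ((N : ℝ) * H) ^ ((M : ℝ) / ((N : ℝ) - (M : ℝ))) := by
  obtain ⟨c, hc0, hBc, hc⟩ := Int.Matrix.exists_ne_zero_int_vec_norm_le B
    (by simpa using hMN) (by simpa using hM)
  simp only [Fintype.card_fin] at hc
  have hBH : max 1 ‖B‖ ≤ H :=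
    max_le hH <| (Matrix.norm_le_iff (by linarith)).2 fun i j => by
      simpa [Int.norm_eq_abs] using hB i j
  have hexp : 0 ≤ (M : ℝ) / (N - M) :=
    div_nonneg M.cast_nonneg (sub_nonneg.2 (by exact_mod_cast hMN.le))
  refine ⟨c, hc0, hBc, fun j => ?_⟩
  calc (|c j| : ℝ) = ‖c j‖ := by simp [Int.norm_eq_abs]
    _ ≤ ‖c‖ := norm_le_pi_norm c j
    _ ≤ (N * max 1 ‖B‖) ^ ((M : ℝ) / (N - M)) := hc
    _ ≤ (N * H) ^ ((M : ℝ) / (N - M)) := by gcongr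
end

section
/- Let k ≥ 1 and C ≥ 1 be integers, let X be a set of k real numbers, and let A(X,C) be the set of integer linear combinations of elements of X with coefficients of absolute value at most C. Then the number of dyadic intervals [2^n, 2^{n+1}), n ≥ 0, that contain an element of A(X,C) ∩ [1, ∞) is at most (2k−1)·(⌊log₂(2kC+1)⌋ + 2). -/
/-!
Gap principle: let `R = 2kC + 1`. If `z₁ < ⋯ < z_m` are positive elements of `A(X, C)` with
`R zᵢ ≤ zᵢ₊₁`, then `m ≤ 2k - 1`. Otherwise Siegel's lemma, applied to the `k × 2k` matrix of
coefficients of `2k` of them, gives a nontrivial integer relation `∑ tᵢ zᵢ = 0` with `|tᵢ| ≤ 2kC`,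
and the largest `zᵢ` with `tᵢ ≠ 0` exceeds `2kC` times the sum of the smaller ones.

Counting: `R < 2 ^ (l + 1)` for `l = ⌊log₂ R⌋`, so witnesses in distinct dyadic intervals whose
indices are congruent modulo `l + 2` are `R`-separated. Each of the `l + 2` residue classes
therefore contains at most `2k - 1` of the indices.
-/

open Finset

def boundedIntCombinations {ι : Type*} [Fintype ι] (x : ι → ℝ) (C : ℕ) : Set ℝ :=
  {z | ∃ a : ι → ℤ, (∀ j, |a j| ≤ (C : ℤ)) ∧ z = ∑ j, (a j : ℝ) * x j}

def IsRatioSeparated (R : ℝ) (Z : Set ℝ) : Prop :=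
  ∀ z ∈ Z, ∀ w ∈ Z, z < w → R * z ≤ w

theorem IsRatioSeparated.mono {R : ℝ} {Y Z : Set ℝ} (h : IsRatioSeparated R Z) (hYZ : Y ⊆ Z) :
    IsRatioSeparated R Y :=
  fun z hz w hw => h z (hYZ hz) w (hYZ hw)

section RatioSeparated

variable {D : ℝ} {Z : Finset ℝ}

theorem mul_sum_lt_of_ratioSeparated {y : ℝ} (hy : 0 < y) (hpos : ∀ z ∈ Z, 0 < z)
    (hsep : IsRatioSeparated (D + 1) Z) (hZy : ∀ z ∈ Z, (D + 1) * z ≤ y) :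
    D * ∑ z ∈ Z, z < y := by
  induction Z using Finset.induction_on_max generalizing y with
  | empty => simpa using hy
  | insert a s has ih =>
    have ha : a ∈ insert a s := mem_insert_self a s
    have hs : ∀ z ∈ s, z ∈ insert a s := fun z hz => mem_insert_of_mem hz
    have hlt : D * ∑ z ∈ s, z < a :=
      ih (hpos a ha) (fun z hz => hpos z (hs z hz))
        (hsep.mono (coe_subset.mpr (subset_insert a s)))
        (fun z hz => hsep z (hs z hz) a ha (has z hz))
    rw [sum_insert fun h => (has a h).false]
    linarith [hZy a ha]

theorem eq_zero_of_sum_mul_eq_zero_of_ratioSeparated {t : ℝ → ℤ} (hpos : ∀ z ∈ Z, 0 < z)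
    (hsep : IsRatioSeparated (D + 1) Z) (ht : ∀ z ∈ Z, |(t z : ℝ)| ≤ D)
    (hsum : ∑ z ∈ Z, t z * z = 0) : ∀ z ∈ Z, t z = 0 := by
  induction Z using Finset.induction_on_max with
  | empty => simp
  | insert a s has ih =>
    have ha : a ∈ insert a s := mem_insert_self a s
    have hs : ∀ z ∈ s, z ∈ insert a s := fun z hz => mem_insert_of_mem hz
    have hpos_s : ∀ z ∈ s, 0 < z := fun z hz => hpos z (hs z hz)
    have hsep_s := hsep.mono (coe_subset.mpr (subset_insert a s))
    rw [sum_insert fun h => (has a h).false] at hsum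
    have hta : t a = 0 := by
      by_contra hta
      have hbig : a ≤ |(t a : ℝ) * a| := by
        rw [abs_mul, abs_of_pos (hpos a ha)]
        exact le_mul_of_one_le_left (hpos a ha).le (by exact_mod_cast Int.one_le_abs hta)
      have hsmall : |∑ z ∈ s, (t z : ℝ) * z| ≤ D * ∑ z ∈ s, z := by
        rw [mul_sum]
        refine (abs_sum_le_sum_abs _ _).trans (sum_le_sum fun z hz => ?_)
        rw [abs_mul, abs_of_pos (hpos_s z hz)]
        exact mul_le_mul_of_nonneg_right (ht z (hs z hz)) (hpos_s z hz).le
      have hlt : D * ∑ z ∈ s, z < a :=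
        mul_sum_lt_of_ratioSeparated (hpos a ha) hpos_s hsep_s
          (fun z hz => hsep z (hs z hz) a ha (has z hz))
      rw [eq_neg_of_add_eq_zero_left hsum, abs_neg] at hbig
      linarith
    rw [hta, Int.cast_zero, zero_mul, zero_add] at hsum
    intro z hz
    rcases mem_insert.mp hz with rfl | hz
    · exact hta
    · exact ih hpos_s hsep_s (fun z hz => ht z (hs z hz)) hsum z hz

end RatioSeparated

section Siegel

attribute [local instance] Matrix.seminormedAddCommGroup

variable {ι : Type*} [Fintype ι] [Nonempty ι] {x : ι → ℝ} {C : ℕ}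

theorem exists_int_relation_of_card_eq (hC : 1 ≤ C) {Z : Finset ℝ}
    (hZ : ↑Z ⊆ boundedIntCombinations x C) (hcard : #Z = 2 * Fintype.card ι) :
    ∃ t : ℝ → ℤ, (∃ z ∈ Z, t z ≠ 0) ∧ (∀ z, |(t z : ℝ)| ≤ 2 * Fintype.card ι * C) ∧
      ∑ z ∈ Z, t z * z = 0 := by
  classical
  have hcoeff : ∀ z : Z, ∃ a : ι → ℤ, (∀ j, |a j| ≤ (C : ℤ)) ∧ (z : ℝ) = ∑ j, (a j : ℝ) * x j :=
    fun z => hZ z.2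
  choose a ha_le ha_eq using hcoeff
  set M : Matrix ι Z ℤ := Matrix.of fun j z => a z j
  have hk : 0 < Fintype.card ι := Fintype.card_pos
  have hcardZ : Fintype.card Z = 2 * Fintype.card ι := by rw [Fintype.card_coe, hcard]
  obtain ⟨s, hs0, hMs, hs_norm⟩ :=
    Int.Matrix.exists_ne_zero_int_vec_norm_le M (by omega) hk
  have hM : max 1 ‖M‖ ≤ C := by
    refine max_le (by exact_mod_cast hC) ((Matrix.norm_le_iff (by positivity)).mpr fun j z => ?_)
    rw [Int.norm_eq_abs]
    exact_mod_cast ha_le z j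
  have hexp : (Fintype.card ι : ℝ) / (Fintype.card Z - Fintype.card ι) = 1 := by
    rw [hcardZ, div_eq_one_iff_eq] <;> push_cast
    · ring
    · have : (0 : ℝ) < Fintype.card ι := by exact_mod_cast hk
      linarith
  rw [hexp, Real.rpow_one, hcardZ] at hs_norm
  refine ⟨fun z => if h : z ∈ Z then s ⟨z, h⟩ else 0, ?_, fun z => ?_, ?_⟩
  · obtain ⟨⟨z, hz⟩, hsz⟩ := Function.ne_iff.mp hs0
    exact ⟨z, hz, by simpa [hz] using hsz⟩
  · dsimp only
    split_ifs with hz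
    · calc |(s ⟨z, hz⟩ : ℝ)| = ‖s ⟨z, hz⟩‖ := (Int.norm_eq_abs _).symm
        _ ≤ ‖s‖ := norm_le_pi_norm s _
        _ ≤ _ := hs_norm.trans (by push_cast; gcongr)
    · rw [Int.cast_zero, abs_zero]
      positivity
  · calc ∑ z ∈ Z, ((if h : z ∈ Z then s ⟨z, h⟩ else 0 : ℤ) : ℝ) * z
        = ∑ z : Z, (s z : ℝ) * z := by
          rw [← sum_coe_sort Z]
          simp
      _ = ∑ j, (M.mulVec s j : ℝ) * x j := by
          simp_rw [ha_eq, mul_sum, Matrix.mulVec, dotProduct, Int.cast_sum, sum_mul]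
          rw [sum_comm]
          refine sum_congr rfl fun j _ => sum_congr rfl fun z _ => ?_
          simp only [M, Matrix.of_apply, Int.cast_mul]
          ring
      _ = 0 := by simp [hMs]

theorem card_le_of_ratioSeparated (hC : 1 ≤ C) {Z : Finset ℝ}
    (hZ : ↑Z ⊆ boundedIntCombinations x C) (hpos : ∀ z ∈ Z, 0 < z)
    (hsep : IsRatioSeparated (2 * Fintype.card ι * C + 1) Z) :
    #Z ≤ 2 * Fintype.card ι - 1 := by
  by_contra! hlarge
  obtain ⟨Y, hYZ, hYcard⟩ := exists_subset_card_eq (show 2 * Fintype.card ι ≤ #Z by omega)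
  obtain ⟨t, ⟨y, hy, hty⟩, ht, hsum⟩ :=
    exists_int_relation_of_card_eq hC ((coe_subset.mpr hYZ).trans hZ) hYcard
  exact hty (eq_zero_of_sum_mul_eq_zero_of_ratioSeparated (fun z hz => hpos z (hYZ hz))
    (hsep.mono (coe_subset.mpr hYZ)) (fun z _ => ht z) hsum y hy)

end Siegel

theorem card_le_mul_of_forall_ratioSeparated_card_le {A : Set ℝ} {R : ℝ} {m l : ℕ} (hR0 : 0 ≤ R)
    (hR : R ≤ 2 ^ (l + 1))
    (hgap : ∀ Z : Finset ℝ, ↑Z ⊆ A → (∀ z ∈ Z, 0 < z) → IsRatioSeparated R Z → #Z ≤ m)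
    {T : Finset ℕ} (hT : ∀ n ∈ T, ∃ z ∈ A, z ∈ Set.Ico (2 ^ n : ℝ) (2 ^ (n + 1))) :
    #T ≤ m * (l + 2) := by
  classical
  choose! g hgA hg using hT
  have hmono : StrictMonoOn g T := fun a ha b hb hab =>
    calc g a < 2 ^ (a + 1) := (hg a ha).2
      _ ≤ 2 ^ b := pow_le_pow_right₀ one_le_two hab
      _ ≤ g b := (hg b hb).1
  have hfiber : ∀ r ∈ range (l + 2), #{n ∈ T | n % (l + 2) = r} ≤ m := by
    intro r _
    set F := {n ∈ T | n % (l + 2) = r}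
    have hFT : F ⊆ T := filter_subset _ _
    have hmonoF : StrictMonoOn g F := hmono.mono hFT
    rw [← card_image_of_injOn hmonoF.injOn]
    refine hgap _ ?_ ?_ ?_
    · simp only [coe_image, Set.image_subset_iff]
      exact fun n hn => hgA n (hFT hn)
    · simp only [mem_image]
      rintro _ ⟨n, hn, rfl⟩
      exact (pow_pos two_pos n).trans_le (hg n (hFT hn)).1
    · simp only [IsRatioSeparated, coe_image, Set.forall_mem_image]
      intro a ha b hb hlt
      have hab : a + (l + 2) ≤ b := by
        have hmod : a ≡ b [MOD l + 2] := (mem_filter.mp ha).2.trans (mem_filter.mp hb).2.symm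
        exact hmod.add_le_of_lt ((hmonoF.lt_iff_lt ha hb).mp hlt)
      calc R * g a ≤ R * 2 ^ (a + 1) := by gcongr; exact (hg a (hFT ha)).2.le
        _ ≤ 2 ^ (l + 1) * 2 ^ (a + 1) := by gcongr
        _ = 2 ^ (a + (l + 2)) := by ring
        _ ≤ 2 ^ b := pow_le_pow_right₀ one_le_two hab
        _ ≤ g b := (hg b (hFT hb)).1
  simpa using card_le_mul_card_image_of_maps_to
    (fun n _ => mem_range.mpr (Nat.mod_lt n (by omega))) m hfiber

theorem Set.ncard_le_of_forall_finset_card_le {α : Type*} {s : Set α} {n : ℕ}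
    (h : ∀ T : Finset α, ↑T ⊆ s → #T ≤ n) : s.ncard ≤ n := by
  have hfin : s.Finite := by
    by_contra hinf
    obtain ⟨T, hTs, hT⟩ := Set.Infinite.exists_subset_card_eq hinf (n + 1)
    have := h T hTs
    omega
  rw [Set.ncard_eq_toFinset_card s hfin]
  exact h _ (by simp)

theorem stmt_5 (k C : ℕ) (hk : 1 ≤ k) (hC : 1 ≤ C)
    (x : Fin k → ℝ)
    (A : Set ℝ)
    (hA : A = {z : ℝ | ∃ a : Fin k → ℤ, (∀ j, |a j| ≤ (C : ℤ)) ∧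
      z = ∑ j, (a j : ℝ) * x j}) :
    ((Set.ncard {n : ℕ | ∃ z ∈ A, 1 ≤ z ∧
        z ∈ Set.Ico ((2:ℝ)^n) ((2:ℝ)^(n+1))} : ℤ))
      ≤ (2 * k - 1) * (⌊Real.logb 2 (2 * k * C + 1)⌋ + 2) := by
  have : Nonempty (Fin k) := ⟨⟨0, hk⟩⟩
  set R : ℕ := 2 * k * C + 1
  have hR : (R : ℝ) = 2 * k * C + 1 := by simp [R]
  have hlog : ⌊Real.logb 2 (2 * k * C + 1)⌋ = Nat.log 2 R := by
    rw [← hR, ← Nat.cast_ofNat, Real.floor_logb_natCast (Nat.cast_nonneg R), Int.log_natCast]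
  have hRpow : (R : ℝ) ≤ 2 ^ (Nat.log 2 R + 1) := by
    exact_mod_cast (Nat.lt_pow_succ_log_self one_lt_two R).le
  have hcount : Set.ncard {n : ℕ | ∃ z ∈ A, 1 ≤ z ∧ z ∈ Set.Ico ((2:ℝ)^n) ((2:ℝ)^(n+1))}
      ≤ (2 * k - 1) * (Nat.log 2 R + 2) := by
    refine Set.ncard_le_of_forall_finset_card_le fun T hT => ?_
    refine card_le_mul_of_forall_ratioSeparated_card_le (A := A) (Nat.cast_nonneg R) hRpow
      (fun Z hZA hpos hsep => ?_) fun n hn => ?_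
    · have := card_le_of_ratioSeparated hC (hA ▸ hZA) hpos (by rwa [Fintype.card_fin, ← hR])
      rwa [Fintype.card_fin] at this
    · obtain ⟨z, hzA, -, hz⟩ := hT hn
      exact ⟨z, hzA, hz⟩
  rw [hlog]
  have : ((2 * k - 1 : ℕ) : ℤ) = 2 * k - 1 := by omega
  calc _ ≤ (((2 * k - 1) * (Nat.log 2 R + 2) : ℕ) : ℤ) := by exact_mod_cast hcount
    _ = _ := by push_cast [this]; ring
end

section
/- Let X be a finite set of nonnegative real numbers and let A(X) = {|Σ_{x∈X} g(x)·x| : g : X → {−1,0,1}} be the set of absolute values of unitary signed subset sums. Then the number of distinct values of ⌊log₂ y⌋ as y ranges over A(X) \ {0} is O(|X| log |X|). -/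
/-!
Choose exponents `e₁ < ⋯ < e_{2n}` of nonzero signed sums `w₁, …, w_{2n}` of the `n` elements of
`X` with pairwise gaps of size `≈ 2 log₂ n`, so that `|wⱼ| > 4n² |wᵢ|` for `i < j`. The sign
vectors of the `wⱼ` are `2n` vectors in `ℤⁿ`, so by Siegel's lemma they satisfy a nontrivial
integer relation with coefficients of size at most `2n`; in the induced relation among the
`wⱼ` the term of largest index dominates all the others, which is absurd. Hence the number of
exponents is at most `2n · O(log n)`: among more exponents, such a gapped family can always be
found inside a single residue class.
-/

open Finset

-- the entrywise sup norm, in which Mathlib states Siegel's lemma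
attribute [local instance] Matrix.seminormedAddCommGroup

theorem Set.ncard_le_of_forall_finset_subset {α : Type*} {S : Set α} {N : ℕ}
    (h : ∀ F : Finset α, ↑F ⊆ S → #F ≤ N) : S.ncard ≤ N := by
  have hfin : S.Finite := by
    by_contra hinf
    obtain ⟨F, hFS, hF⟩ := Set.Infinite.exists_subset_card_eq hinf (N + 1)
    linarith [h F hFS]
  rw [← hfin.coe_toFinset, Set.ncard_coe_finset]
  exact h _ hfin.coe_toFinset.subset

theorem Finset.exists_subset_card_eq_forall_add_le {F : Finset ℤ} {K s : ℕ} (hs : 0 < s)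
    (hF : K * s ≤ #F) : ∃ E ⊆ F, #E = K ∧ ∀ a ∈ E, ∀ b ∈ E, a < b → a + s ≤ b := by
  have hmaps : ∀ m ∈ F, m % (s : ℤ) ∈ Ico (0 : ℤ) s := fun m _ =>
    mem_Ico.2 ⟨Int.emod_nonneg _ (by omega), Int.emod_lt_of_pos _ (by omega)⟩
  obtain ⟨r, -, hr⟩ := exists_le_card_fiber_of_mul_le_card_of_maps_to hmaps
    (nonempty_Ico.2 (by omega)) (n := K) (by simpa [mul_comm] using hF)
  obtain ⟨E, hEF, hE⟩ := exists_subset_card_eq hr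
  refine ⟨E, hEF.trans (filter_subset _ _), hE, fun a ha b hb hab => ?_⟩
  have hmod : a ≡ b [ZMOD s] := by
    rw [Int.ModEq, (mem_filter.1 (hEF ha)).2, (mem_filter.1 (hEF hb)).2]
  linarith [Int.le_of_dvd (sub_pos.2 hab) hmod.dvd]

theorem Int.two_pow_mul_lt_of_log_add_le {R : Type*} [Field R] [LinearOrder R]
    [IsStrictOrderedRing R] [FloorSemiring R] {a b : R} (hb : 0 < b) {s : ℕ}
    (h : Int.log 2 a + s ≤ Int.log 2 b) : 2 ^ s * a < 2 * b := by
  have ha := Int.lt_zpow_succ_log_self (b := 2) one_lt_two a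
  have hb := Int.zpow_log_le_self (b := 2) one_lt_two hb
  push_cast at ha hb
  calc 2 ^ s * a < 2 ^ (s : ℤ) * 2 ^ (Int.log 2 a + 1) := by
        rw [zpow_natCast]; gcongr
    _ = 2 * 2 ^ (Int.log 2 a + s) := by
        rw [← zpow_add₀ two_ne_zero, ← zpow_one_add₀ two_ne_zero]; ring_nf
    _ ≤ 2 * b := by
        gcongr
        exact (zpow_le_zpow_right₀ one_le_two h).trans hb

theorem exists_max_ne_zero {ι M : Type*} [Fintype ι] [LinearOrder ι] [Zero M] {μ : ι → M}
    (hμ : μ ≠ 0) : ∃ j, μ j ≠ 0 ∧ ∀ i, j < i → μ i = 0 := by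
  classical
  have hS : (univ.filter fun i => μ i ≠ 0).Nonempty := by
    obtain ⟨i, hi⟩ := Function.ne_iff.1 hμ
    exact ⟨i, by simpa using hi⟩
  refine ⟨_, (mem_filter.1 (max'_mem _ hS)).2, fun i hi => ?_⟩
  by_contra h
  exact (le_max' _ i (by simpa using h)).not_gt hi

theorem sum_intCast_mul_ne_zero_of_lacunary {ι 𝕜 : Type*} [Fintype ι] [LinearOrder ι]
    [Field 𝕜] [LinearOrder 𝕜] [IsStrictOrderedRing 𝕜]
    {w : ι → 𝕜} (hw0 : ∀ i, w i ≠ 0) {T : ℕ}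
    (hw : ∀ i j, i < j → Fintype.card ι * T * |w i| ≤ |w j|)
    {μ : ι → ℤ} (hμ0 : μ ≠ 0) (hμ : ∀ i, |μ i| ≤ T) : ∑ i, (μ i : 𝕜) * w i ≠ 0 := by
  classical
  intro hsum
  obtain ⟨j, hj, hzero⟩ := exists_max_ne_zero hμ0
  set below := univ.filter (· < j)
  have hsplit : (μ j : 𝕜) * w j = -∑ i ∈ below, (μ i : 𝕜) * w i := by
    have hrest : ∑ i ∈ univ.filter (¬ · < j), (μ i : 𝕜) * w i = μ j * w j :=
      sum_eq_single_of_mem j (by simp) fun i hi hij => by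
        simp [hzero i (lt_of_le_of_ne (not_lt.1 (mem_filter.1 hi).2) (Ne.symm hij))]
    rw [← sum_filter_add_sum_filter_not univ (· < j), hrest] at hsum
    exact eq_neg_of_add_eq_zero_right hsum
  have hbelow : #below < Fintype.card ι :=
    card_lt_univ_of_notMem (x := j) (by simp [below])
  have hμj : (1 : 𝕜) ≤ |(μ j : 𝕜)| := by exact_mod_cast Int.one_le_abs hj
  have hwj : 0 < |w j| := abs_pos.2 (hw0 j)
  have hdom : (Fintype.card ι : 𝕜) * |w j| ≤ #below * |w j| :=
    calc (Fintype.card ι : 𝕜) * |w j| ≤ Fintype.card ι * |(μ j : 𝕜) * w j| := by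
          rw [abs_mul]; gcongr; nlinarith
      _ ≤ ∑ i ∈ below, Fintype.card ι * (|(μ i : 𝕜)| * |w i|) := by
          rw [hsplit, abs_neg, ← mul_sum]
          gcongr
          exact (abs_sum_le_sum_abs _ _).trans_eq (by simp only [abs_mul])
      _ ≤ ∑ i ∈ below, |w j| := by
          gcongr with i hi
          have : |(μ i : 𝕜)| ≤ T := by exact_mod_cast hμ i
          calc (Fintype.card ι : 𝕜) * (|(μ i : 𝕜)| * |w i|) ≤ Fintype.card ι * T * |w i| := by
                rw [← mul_assoc]; gcongr
            _ ≤ |w j| := hw i j (mem_filter.1 hi).2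
      _ = #below * |w j| := by rw [sum_const, nsmul_eq_mul]
  exact (le_of_mul_le_mul_right hdom hwj).not_gt (by exact_mod_cast hbelow)

theorem exists_lt_abs_signedSum_lt_mul {κ 𝕜 : Type*} [Fintype κ] [LinearOrder κ]
    [Field 𝕜] [LinearOrder 𝕜] [IsStrictOrderedRing 𝕜] {X : Finset 𝕜} (hX : X.Nonempty)
    (hκ : Fintype.card κ = 2 * #X) (g : κ → 𝕜 → ℤ) (hg : ∀ k x, |g k x| ≤ 1)
    (hw0 : ∀ k, ∑ x ∈ X, (g k x : 𝕜) * x ≠ 0) :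
    ∃ i j, i < j ∧ |∑ x ∈ X, (g j x : 𝕜) * x| < 4 * #X ^ 2 * |∑ x ∈ X, (g i x : 𝕜) * x| := by
  by_contra! hlac
  set A : Matrix X κ ℤ := Matrix.of fun x k => g k x
  have hXκ : Fintype.card X < Fintype.card κ := by
    rw [hκ, Fintype.card_coe]; linarith [hX.card_pos]
  obtain ⟨μ, hμ0, hrel, hμ⟩ :=
    Int.Matrix.exists_ne_zero_int_vec_norm_le A hXκ (by simpa using hX.card_pos)
  have hA : ‖A‖ ≤ 1 := (Matrix.norm_le_iff zero_le_one).2 fun x k => by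
    simp only [A, Matrix.of_apply, Int.norm_eq_abs]
    exact_mod_cast hg k x
  have hexp : (Fintype.card X : ℝ) / (Fintype.card κ - Fintype.card X) = 1 := by
    rw [hκ, Fintype.card_coe]; push_cast
    rw [two_mul, add_sub_cancel_right, div_self (Nat.cast_ne_zero.2 hX.card_pos.ne')]
  rw [max_eq_left hA, mul_one, hexp, Real.rpow_one, hκ] at hμ
  refine sum_intCast_mul_ne_zero_of_lacunary hw0 (T := 2 * #X) (fun i j hij => ?_) hμ0
    (fun k => ?_) ?_
  · rw [hκ]; push_cast; linarith [hlac i j hij]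
  · have := (norm_le_pi_norm μ k).trans hμ
    rw [Int.norm_eq_abs] at this
    exact_mod_cast this
  · calc ∑ k, (μ k : 𝕜) * ∑ x ∈ X, (g k x : 𝕜) * x
          = ∑ x ∈ X, ((∑ k, g k x * μ k : ℤ) : 𝕜) * x := by
            simp_rw [mul_sum]
            rw [sum_comm]
            push_cast
            simp_rw [sum_mul]
            exact sum_congr rfl fun x _ => sum_congr rfl fun k _ => by ring
      _ = 0 := sum_eq_zero fun x hx => by
            rw [show ∑ k, g k x * μ k = 0 from congrFun hrel ⟨x, hx⟩]
            simp

theorem two_mul_mul_natLog_add_le (n : ℕ) :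
    (2 * n * (2 * Nat.log 2 n + 5) : ℝ) ≤ 16 * (n * Real.log n + 1) := by
  rcases n.eq_zero_or_pos with rfl | hn
  · norm_num
  have hn' : (0 : ℝ) < n := by exact_mod_cast hn
  have hlog : (Nat.log 2 n : ℝ) * Real.log 2 ≤ Real.log n := by
    have := Real.natLog_le_logb n 2
    rwa [Real.logb, le_div_iff₀ (Real.log_pos (by norm_num)), Nat.cast_ofNat] at this
  have hlin : (n : ℝ) - 1 ≤ n * Real.log n := by
    have := mul_le_mul_of_nonneg_left (Real.one_sub_inv_le_log_of_pos hn') hn'.le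
    rwa [mul_sub, mul_one, mul_inv_cancel₀ hn'.ne'] at this
  have hnl : (0 : ℝ) ≤ n * Nat.log 2 n := by positivity
  nlinarith [mul_le_mul_of_nonneg_left hlog hn'.le,
    mul_le_mul_of_nonneg_left Real.log_two_gt_d9.le hnl]

def floorLogSignedSums (X : Finset ℝ) : Set ℤ :=
  {m : ℤ | ∃ g : ℝ → ℤ,
    (∀ x, g x = -1 ∨ g x = 0 ∨ g x = 1) ∧
    |∑ x ∈ X, (g x : ℝ) * x| ≠ 0 ∧
    ⌊Real.logb 2 |∑ x ∈ X, (g x : ℝ) * x|⌋ = m}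

theorem card_le_of_subset_floorLogSignedSums {X : Finset ℝ} {F : Finset ℤ}
    (hF : ↑F ⊆ floorLogSignedSums X) : #F ≤ 2 * #X * (2 * Nat.log 2 #X + 5) := by
  by_contra! hlt
  set s := 2 * Nat.log 2 #X + 5 with hs
  obtain ⟨E, hEF, hE, hgap⟩ := exists_subset_card_eq_forall_add_le (by omega) hlt.le
  choose g hg hw0 hlog using fun e : E => hF (hEF e.2)
  have hX : X.Nonempty := by
    obtain ⟨m, hm⟩ := card_pos.1 (pos_of_gt hlt)
    obtain ⟨g, -, hg0, -⟩ := hF hm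
    exact nonempty_of_sum_ne_zero (abs_ne_zero.1 hg0)
  obtain ⟨i, j, hij, hji⟩ := exists_lt_abs_signedSum_lt_mul hX (by rw [Fintype.card_coe, hE]) g
    (fun e x => by rcases hg e x with h | h | h <;> simp [h]) (fun e => abs_ne_zero.1 (hw0 e))
  have hlog2 : ∀ e, Int.log 2 |∑ x ∈ X, (g e x : ℝ) * x| = e := fun e => by
    rw [← hlog e, ← Real.floor_logb_natCast (abs_nonneg _), Nat.cast_ofNat]
  have hsep := Int.two_pow_mul_lt_of_log_add_le (abs_pos.2 (abs_ne_zero.1 (hw0 j)))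
    (s := s) (by rw [hlog2 i, hlog2 j]; exact hgap _ i.2 _ j.2 hij)
  have hpow : (8 * #X ^ 2 : ℝ) ≤ 2 ^ s := by
    have := Nat.lt_pow_succ_log_self one_lt_two #X
    have : 8 * #X ^ 2 ≤ 2 ^ s :=
      calc 8 * #X ^ 2 ≤ 8 * (2 ^ (Nat.log 2 #X + 1)) ^ 2 := by gcongr
        _ = 2 ^ s := by rw [hs]; ring
    exact_mod_cast this
  nlinarith [mul_le_mul_of_nonneg_right hpow (abs_nonneg (∑ x ∈ X, (g i x : ℝ) * x))]

theorem stmt_6 :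
    ∃ c : ℝ, 0 < c ∧ ∀ (X : Finset ℝ), (∀ x ∈ X, 0 ≤ x) →
      (Set.ncard {m : ℤ | ∃ g : ℝ → ℤ,
          (∀ x, g x = -1 ∨ g x = 0 ∨ g x = 1) ∧
          |∑ x ∈ X, (g x : ℝ) * x| ≠ 0 ∧
          ⌊Real.logb 2 |∑ x ∈ X, (g x : ℝ) * x|⌋ = m} : ℝ)
        ≤ c * ((X.card : ℝ) * Real.log (X.card) + 1) := by
  refine ⟨16, by norm_num, fun X _ => ?_⟩
  calc ((floorLogSignedSums X).ncard : ℝ) ≤ (2 * #X * (2 * Nat.log 2 #X + 5) : ℕ) :=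
        Nat.cast_le.2 (Set.ncard_le_of_forall_finset_subset
          fun _ => card_le_of_subset_floorLogSignedSums)
    _ ≤ 16 * (#X * Real.log #X + 1) := by
        push_cast
        exact two_mul_mul_natLog_add_le #X
end

section
/- Let v ∈ ℝ^S with states sorted so that v(s_1) ≥ v(s_2) ≥ ... ≥ v(s_n), let p̂ ∈ Δ(S) and δ ≥ 0 define the uncertainty set P = {p ∈ Δ(S) : ‖p − p̂‖_∞ ≤ δ}. Then there exists a maximizer p* of p·v over P such that every coordinate of p* equals either p̂(s)+δ, p̂(s)−δ, or 0 (with p̂(s) ≤ δ in the last case), with at most one exceptional coordinate taking an intermediate value strictly between p̂(s)−δ and p̂(s)+δ determined by the constraint that coordinates sum to 1. -/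
/-!
Greedy argument. Sweep the states in order of decreasing value, putting each one at its upper
bound `p̂ s + δ` while all later states sit at their lower bound `max 0 (p̂ s - δ)`, and stop at the
first state `k` at which the total mass reaches `1`; state `k` takes the leftover mass. Every
feasible `q` lies below this `p` before `k` and above it after `k`, so
`∑ (p s - q s) (v s - v k) ≥ 0`, which, since `∑ p = ∑ q`, says `∑ q v ≤ ∑ p v`.
-/

open Finset

theorem Nat.exists_map_le_le_map_succ {α : Type*} [LinearOrder α] {g : ℕ → α} {a : α} {n : ℕ}
    (hn : 0 < n) (h0 : g 0 ≤ a) (hn' : a ≤ g n) : ∃ k < n, g k ≤ a ∧ a ≤ g (k + 1) := by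
  induction n with
  | zero => omega
  | succ m ih =>
    rcases Nat.eq_zero_or_pos m with rfl | hm
    · exact ⟨0, one_pos, h0, hn'⟩
    by_cases hm' : a ≤ g m
    · obtain ⟨k, hk, hgk⟩ := ih hm hm'
      exact ⟨k, hk.trans m.lt_succ_self, hgk⟩
    · exact ⟨m, m.lt_succ_self, (not_le.mp hm').le, hn'⟩

section OrderedRing

variable {R ι : Type*} [CommRing R] [LinearOrder R] [IsStrictOrderedRing R] [Fintype ι]

theorem Finset.sum_mul_le_sum_mul_of_mul_sub_nonneg {p q v : ι → R} (t : R)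
    (hsum : ∑ s, q s = ∑ s, p s) (h : ∀ s, 0 ≤ (p s - q s) * (v s - t)) :
    ∑ s, q s * v s ≤ ∑ s, p s * v s := by
  have hexpand : ∑ s, (p s - q s) * (v s - t) =
      ∑ s, p s * v s - ∑ s, q s * v s - (∑ s, p s - ∑ s, q s) * t := by
    simp only [sub_mul, mul_sub, sum_sub_distrib, sum_mul]
  have hnonneg := sum_nonneg fun s (_ : s ∈ univ) => h s
  rwa [hexpand, hsum, sub_self, zero_mul, sub_zero, sub_nonneg] at hnonneg

theorem Antitone.sum_mul_le_sum_mul_of_threshold [LinearOrder ι] {v : ι → R} (hv : Antitone v)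
    {l u p q : ι → R} {k : ι} (hlow : ∀ s < k, p s = u s) (hhigh : ∀ s, k < s → p s = l s)
    (hlq : l ≤ q) (hqu : q ≤ u) (hsum : ∑ s, q s = ∑ s, p s) :
    ∑ s, q s * v s ≤ ∑ s, p s * v s := by
  refine sum_mul_le_sum_mul_of_mul_sub_nonneg (v k) hsum fun s => ?_
  rcases lt_trichotomy s k with hs | rfl | hs
  · rw [hlow s hs]
    exact mul_nonneg (sub_nonneg.mpr (hqu s)) (sub_nonneg.mpr (hv hs.le))
  · simp
  · rw [hhigh s hs]
    exact mul_nonneg_of_nonpos_of_nonpos (sub_nonpos.mpr (hlq s)) (sub_nonpos.mpr (hv hs.le))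

theorem Fin.exists_threshold_sum_eq {n : ℕ} [NeZero n] {l u : Fin n → R} {a : R} (hlu : l ≤ u)
    (hl : ∑ s, l s ≤ a) (hu : a ≤ ∑ s, u s) :
    ∃ p : Fin n → R, ∑ s, p s = a ∧ l ≤ p ∧ p ≤ u ∧
      ∃ k, (∀ s < k, p s = u s) ∧ ∀ s, k < s → p s = l s := by
  let f : ℕ → Fin n → R := fun m s => if (s : ℕ) < m then u s else l s
  have hstep : ∀ k : Fin n, ∑ s, f (k + 1) s = ∑ s, f k s + (u k - l k) := by
    intro k
    have hoff : ∀ s ∈ univ.erase k, f (k + 1) s = f k s := fun s hs => by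
      have : (s : ℕ) ≠ k := Fin.val_ne_of_ne (ne_of_mem_erase hs)
      simp only [f]
      congr 1
      grind
    rw [← add_sum_erase _ _ (mem_univ k), ← add_sum_erase _ _ (mem_univ k), sum_congr rfl hoff]
    simp only [f, lt_add_one, lt_irrefl, if_true, if_false]
    abel
  obtain ⟨K, hK, hfK, hfK1⟩ := Nat.exists_map_le_le_map_succ (g := fun m => ∑ s, f m s)
    (NeZero.pos n) (by simpa [f] using hl) (by simpa [f] using hu)
  set k : Fin n := ⟨K, hK⟩
  have hk : ∑ s, f (K + 1) s = ∑ s, f K s + (u k - l k) := hstep k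
  have hfk : f K k = l k := if_neg (lt_irrefl K)
  set p : Fin n → R := f K + Pi.single k (a - ∑ s, f K s)
  have hpk : p k = l k + (a - ∑ s, f K s) := by simp [p, hfk]
  have hp_ne : ∀ s ≠ k, p s = f K s := fun s hs => by simp [p, hs]
  refine ⟨p, by simp [p, sum_add_distrib], fun s => ?_, fun s => ?_, k, fun s hs => ?_,
    fun s hs => ?_⟩
  · rcases eq_or_ne s k with rfl | hs
    · rw [hpk]; linarith
    · rw [hp_ne s hs]; simp only [f]; split_ifs <;> simp [hlu s]
  · rcases eq_or_ne s k with rfl | hs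
    · rw [hpk]; linarith
    · rw [hp_ne s hs]; simp only [f]; split_ifs <;> simp [hlu s]
  · rw [hp_ne s hs.ne]; exact if_pos hs
  · rw [hp_ne s hs.ne']; exact if_neg (not_lt.mpr hs.le)

end OrderedRing

theorem mem_stdSimplex_and_abs_sub_le_iff {ι : Type*} [Fintype ι] {c q : ι → ℝ} {δ : ℝ} :
    (q ∈ stdSimplex ℝ ι ∧ ∀ s, |q s - c s| ≤ δ) ↔
      ∑ s, q s = 1 ∧ (fun s => max 0 (c s - δ)) ≤ q ∧ q ≤ fun s => c s + δ := by
  simp only [stdSimplex, Set.mem_ofPred_eq, Pi.le_def, max_le_iff, abs_sub_le_iff, ← forall_and]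
  refine ⟨fun ⟨⟨h0, h1⟩, h⟩ => ⟨h1, fun s => ?_⟩,
    fun ⟨h1, h⟩ => ⟨⟨fun s => (h s).1.1, h1⟩, fun s => ?_⟩⟩
  · have := h s; have := h0 s; exact ⟨⟨this, by linarith⟩, by linarith⟩
  · have := h s; constructor <;> linarith

theorem eq_add_or_eq_sub_or_eq_zero_of_eq_max_or_eq_add {x y δ : ℝ}
    (h : x = max 0 (y - δ) ∨ x = y + δ) : x = y + δ ∨ x = y - δ ∨ (y ≤ δ ∧ x = 0) := by
  rcases h with rfl | rfl
  · rcases le_total (y - δ) 0 with h | h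
    · exact Or.inr (Or.inr ⟨by linarith, max_eq_left h⟩)
    · exact Or.inr (Or.inl (max_eq_right h))
  · exact Or.inl rfl

theorem stmt_19 (n : ℕ) (v : Fin n → ℝ)
    (hsorted : ∀ i j : Fin n, i ≤ j → v j ≤ v i)
    (phat : Fin n → ℝ) (hphat : phat ∈ stdSimplex ℝ (Fin n))
    (δ : ℝ) (hδ : 0 ≤ δ)
    (P : Set (Fin n → ℝ))
    (hP : P = {p ∈ stdSimplex ℝ (Fin n) | ∀ s, |p s - phat s| ≤ δ}) :
    ∃ p ∈ P, (∀ q ∈ P, ∑ s, q s * v s ≤ ∑ s, p s * v s) ∧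
      ∃ E : Finset (Fin n), E.card ≤ 1 ∧
        (∀ s ∉ E, p s = phat s + δ ∨ p s = phat s - δ ∨ (phat s ≤ δ ∧ p s = 0)) ∧
        (∀ s ∈ E, phat s - δ < p s ∧ p s < phat s + δ) := by
  subst hP
  obtain ⟨hphat0, hphat1⟩ := hphat
  have : NeZero n := ⟨by rintro rfl; simp at hphat1⟩
  set l : Fin n → ℝ := fun s => max 0 (phat s - δ)
  set u : Fin n → ℝ := fun s => phat s + δ
  obtain ⟨p, hp1, hlp, hpu, k, hlow, hhigh⟩ := Fin.exists_threshold_sum_eq (a := 1) (l := l)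
    (u := u) (fun s => max_le (by linarith [hphat0 s]) (by linarith))
    (hphat1 ▸ sum_le_sum fun s _ => max_le (hphat0 s) (by linarith))
    (hphat1 ▸ sum_le_sum fun s _ => by linarith)
  have hinterior : ∀ s, l s < p s → p s < u s → s = k := fun s hl hu => by
    rcases lt_trichotomy s k with hs | hs | hs
    · exact absurd (hlow s hs) hu.ne
    · exact hs
    · exact absurd (hhigh s hs) hl.ne'
  refine ⟨p, mem_stdSimplex_and_abs_sub_le_iff.2 ⟨hp1, hlp, hpu⟩, fun q hq => ?_,
    univ.filter fun s => l s < p s ∧ p s < u s, ?_, fun s hs => ?_, fun s hs => ?_⟩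
  · obtain ⟨hq1, hlq, hqu⟩ := mem_stdSimplex_and_abs_sub_le_iff.1 hq
    exact (show Antitone v from fun i j => hsorted i j).sum_mul_le_sum_mul_of_threshold
      hlow hhigh hlq hqu (hq1.trans hp1.symm)
  · refine card_le_one.2 fun s hs t ht => ?_
    simp only [mem_filter] at hs ht
    exact (hinterior s hs.2.1 hs.2.2).trans (hinterior t ht.2.1 ht.2.2).symm
  · simp only [mem_filter, mem_univ, true_and, not_and_or, not_lt] at hs
    refine eq_add_or_eq_sub_or_eq_zero_of_eq_max_or_eq_add ?_
    rcases hs with h | h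
    · exact Or.inl (le_antisymm h (hlp s))
    · exact Or.inr (le_antisymm (hpu s) h)
  · simp only [mem_filter, mem_univ, true_and] at hs
    exact ⟨(le_max_right _ _).trans_lt hs.1, hs.2⟩
end
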